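/- (Claim 8) Let n ≥ 3, 1 ≤ r ≤ n−2 and 2 ≤ s ≤ k−1 be integers, and let A ⊆ [k]^n be a compressed set with B_{≥r+1} ∪ ([s]^n ∩ B_r) ⊆ A ⊆ B_{≥r+1} ∪ ([s+1]^n ∩ B_r), where [m]^n = {0,…,m−1}^n. Set D = A ∩ B_r and let 𝒜 be the collection of nonempty subsets of {1,…,n} of size at most n−r; for X ∈ 𝒜, C_X = {x ∈ [k]^n : m(x) = s, R_s(x) = X, |R_0(x)| = r}. Let T ∈ 𝒜 be the largest element under the binary order with C_T ∩ D ≠ ∅. Then for every S ∈ 𝒜 with S <_bin T we have d(C_S) ⊆ d(D). -/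

import Mathlib

/-!
Fix `w ∈ C_T ∩ D`. A point `z` of `d(C_S)` has `r + 1` zeros, values at most `s`, and top level
`R_s(z) ⊆ S`, which is binary-below `T = R_s(w)`; let `m` witness this. Keep `w` on
`U = {m} ∪ {j ∈ R_s(z) : j > m}` and lower its other nonzero coordinates to `1`: the result `u`
lies below `w` coordinatewise, hence in the `≤`-order, and agrees with `w` at `m`, so `u ∈ A`
by compression. Raising a well-chosen zero of `z` to `1` gives `y ∈ B_r` with `R_s(y) <_bin U`,
hence `y < u`, and `y` agrees with `u` in some coordinate; compression again gives `y ∈ A`,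
and `z ∈ d({y})`.
-/

open Finset
open scoped Classical

/-- `R_i(x)`: the set of coordinates of `x` equal to `i`.
The ambient alphabet is `[k+1] = {0,…,k}`. -/
noncomputable def rset {k N : ℕ} (x : Fin N → Fin (k + 1)) (i : ℕ) : Finset (Fin N) :=
  Finset.univ.filter fun j => (x j : ℕ) = i

/-- the strict binary order on finite sets of coordinates:
`X <_bin Y` iff `X ≠ Y` and `max (X Δ Y) ∈ Y`. -/
def binLT {N : ℕ} (X Y : Finset (Fin N)) : Prop :=
  ∃ m ∈ Y, m ∉ X ∧ ∀ j : Fin N, ((j ∈ X ∧ j ∉ Y) ∨ (j ∈ Y ∧ j ∉ X)) → j ≤ m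

/-- the strict `≤`-order on `[k+1]^N`: `x < y` iff `|R_0(x)| > |R_0(y)|`, or
`|R_0(x)| = |R_0(y)|` and for the largest `i` with `R_i(x) ≠ R_i(y)` we have
`max (R_i(x) Δ R_i(y)) ∈ R_i(y)`. -/
def plt {k N : ℕ} (x y : Fin N → Fin (k + 1)) : Prop :=
  (rset y 0).card < (rset x 0).card ∨
    ((rset x 0).card = (rset y 0).card ∧
      ∃ i : ℕ, binLT (rset x i) (rset y i) ∧ ∀ j : ℕ, i < j → rset x j = rset y j)

/-- the `≤`-order on `[k+1]^N`. -/
def ple {k N : ℕ} (x y : Fin N → Fin (k + 1)) : Prop := x = y ∨ plt x y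

/-- `B` is an initial segment of the `≤`-order. -/
def isInitSeg {k N : ℕ} (B : Finset (Fin N → Fin (k + 1))) : Prop :=
  ∀ y ∈ B, ∀ x, ple x y → x ∈ B

/-- the `d`-shadow: all points obtained from a point of `A` by flipping one
nonzero coordinate to `0`. -/
noncomputable def dShadow {k N : ℕ} (A : Finset (Fin N → Fin (k + 1))) :
    Finset (Fin N → Fin (k + 1)) :=
  A.biUnion fun x =>
    (Finset.univ.filter fun i => x i ≠ 0).image fun i => Function.update x i 0

/-- the initial segment of the `≤`-order on `[k+1]^N` of cardinality `m`. -/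
noncomputable def initSeg (k N m : ℕ) : Finset (Fin N → Fin (k + 1)) :=
  Finset.univ.filter fun x => (Finset.univ.filter fun y => ple y x).card ≤ m

/-- the `C_s`-compression of `A ⊆ [k+1]^(n+1)`: replace each slice
`A_{s,t} = {y : t_s y ∈ A}` by the initial segment of the same size. -/
noncomputable def compress {k n : ℕ} (s : Fin (n + 1)) (A : Finset (Fin (n + 1) → Fin (k + 1))) :
    Finset (Fin (n + 1) → Fin (k + 1)) :=
  Finset.univ.biUnion fun t : Fin (k + 1) =>
    (initSeg k n
        (Finset.univ.filter fun y : Fin n → Fin (k + 1) => s.insertNth t y ∈ A).card).image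
      fun y => s.insertNth t y

/-- `A` is compressed if every `C_s`-compression fixes it. -/
def IsCompressed {k n : ℕ} (A : Finset (Fin (n + 1) → Fin (k + 1))) : Prop :=
  ∀ s : Fin (n + 1), compress s A = A

/-- `B_r`: points with exactly `r` zero coordinates. -/
noncomputable def Bexact (k N r : ℕ) : Finset (Fin N → Fin (k + 1)) :=
  Finset.univ.filter fun x => (rset x 0).card = r

/-- `B_{≥r}`: points with at least `r` zero coordinates. -/
noncomputable def Bge (k N r : ℕ) : Finset (Fin N → Fin (k + 1)) :=
  Finset.univ.filter fun x => r ≤ (rset x 0).card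

/-- `m(x)`: the largest coordinate value of `x`. -/
noncomputable def mval {k N : ℕ} (x : Fin N → Fin (k + 1)) : ℕ :=
  Finset.univ.sup fun i => (x i : ℕ)

/-- the class `C_X`: points with maximal coordinate `s`, attained exactly on `X`,
and exactly `r` zero coordinates. -/
noncomputable def classSet (k N s r : ℕ) (X : Finset (Fin N)) : Finset (Fin N → Fin (k + 1)) :=
  Finset.univ.filter fun x => mval x = s ∧ rset x s = X ∧ (rset x 0).card = r

/-- `[m]^N = {0,…,m−1}^N`. -/
noncomputable def box (k N m : ℕ) : Finset (Fin N → Fin (k + 1)) :=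
  Finset.univ.filter fun x => ∀ i, (x i : ℕ) < m

/-- `{1,…,s−1}^N`. -/
noncomputable def box1 (k N s : ℕ) : Finset (Fin N → Fin (k + 1)) :=
  Finset.univ.filter fun x => ∀ i, 1 ≤ (x i : ℕ) ∧ (x i : ℕ) ≤ s - 1

/-- `B` is a down-set. -/
def isDownSet {k N : ℕ} (B : Finset (Fin N → Fin (k + 1))) : Prop :=
  ∀ y ∈ B, ∀ x : Fin N → Fin (k + 1), (∀ j, (x j : ℕ) ≤ (y j : ℕ)) → x ∈ B

@[simp]
lemma mem_rset {k N : ℕ} {x : Fin N → Fin (k + 1)} {i : ℕ} {p : Fin N} :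
    p ∈ rset x i ↔ (x p : ℕ) = i := by
  simp [rset]

lemma rset_eq_empty_of_lt {k N s c : ℕ} {x : Fin N → Fin (k + 1)}
    (hx : ∀ p, (x p : ℕ) ≤ s) (hc : s < c) : rset x c = ∅ := by
  ext p
  simpa using (hx p).trans_lt hc |>.ne

lemma rset_update {k N : ℕ} (x : Fin N → Fin (k + 1)) (j : Fin N) (c : Fin (k + 1)) (i : ℕ) :
    rset (Function.update x j c) i =
      if (c : ℕ) = i then insert j (rset x i) else (rset x i).erase j := by
  ext p
  by_cases hp : p = j
  · subst hp
    split_ifs with hc <;> simp [hc]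
  · split_ifs <;> simp [hp]

lemma image_rset_removeNth {k n : ℕ} (p : Fin (n + 1)) (x : Fin (n + 1) → Fin (k + 1))
    (i : ℕ) :
    (rset (p.removeNth x) i).image p.succAbove = (rset x i).erase p := by
  ext q
  rcases Fin.eq_self_or_eq_succAbove p q with rfl | ⟨a, rfl⟩
  · simp [Fin.succAbove_ne]
  · simp [Fin.succAbove_ne, Fin.removeNth]

lemma card_rset_removeNth {k n : ℕ} (p : Fin (n + 1)) (x : Fin (n + 1) → Fin (k + 1))
    (i : ℕ) :
    #(rset x i) = #(rset (p.removeNth x) i) + if (x p : ℕ) = i then 1 else 0 := by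
  rw [← card_image_of_injective (rset (p.removeNth x) i) Fin.succAbove_right_injective,
    image_rset_removeNth]
  split_ifs with h
  · rw [card_erase_add_one (mem_rset.2 h)]
  · rw [erase_eq_of_notMem (by simpa using h), add_zero]

section BinaryOrder

open scoped symmDiff

variable {N : ℕ} {X X' Y Z : Finset (Fin N)}

lemma binLT_iff_toColex_lt : binLT X Y ↔ toColex X < toColex Y := by
  rw [Colex.toColex_lt_toColex_iff_max'_mem]
  constructor
  · rintro ⟨m, hmY, hmX, hm⟩
    have hXY : X ≠ Y := (ne_of_mem_of_not_mem' hmY hmX).symm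
    refine ⟨hXY, ?_⟩
    have hmax : (X ∆ Y).max' (symmDiff_nonempty.2 hXY) = m :=
      le_antisymm (max'_le _ _ _ fun j hj => hm j (mem_symmDiff.1 hj))
        (le_max' _ _ (mem_symmDiff.2 (Or.inr ⟨hmY, hmX⟩)))
    rwa [hmax]
  · rintro ⟨hXY, hmax⟩
    have hmem := max'_mem _ (symmDiff_nonempty.2 hXY)
    refine ⟨_, hmax, fun h => ?_, fun j hj => le_max' _ _ (mem_symmDiff.2 hj)⟩
    exact (mem_symmDiff.1 hmem).elim (fun h' => h'.2 hmax) (fun h' => h'.2 h)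

lemma binLT_trans (hXY : binLT X Y) (hYZ : binLT Y Z) : binLT X Z := by
  rw [binLT_iff_toColex_lt] at *
  exact hXY.trans hYZ

lemma binLT_of_subset_left (hX : X' ⊆ X) (h : binLT X Y) : binLT X' Y := by
  rw [binLT_iff_toColex_lt] at *
  exact (Colex.toColex_le_toColex_of_subset hX).trans_lt h

lemma binLT_erase_iff {p : Fin N} (hp : p ∈ X ↔ p ∈ Y) :
    binLT (X.erase p) (Y.erase p) ↔ binLT X Y := by
  simp only [binLT_iff_toColex_lt]
  by_cases hX : p ∈ X
  · rw [← sdiff_singleton_eq_erase, ← sdiff_singleton_eq_erase,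
      Colex.toColex_sdiff_lt_toColex_sdiff (singleton_subset_iff.2 hX)
        (singleton_subset_iff.2 (hp.1 hX))]
  · rw [erase_eq_of_notMem hX, erase_eq_of_notMem (hp.not.1 hX)]

lemma exists_binLT_insert_filter (h : binLT X Y) :
    ∃ m ∈ Y, m ∉ X ∧ insert m (X.filter (m < ·)) ⊆ Y ∧
      binLT X (insert m (X.filter (m < ·))) := by
  obtain ⟨m, hmY, hmX, hm⟩ := h
  refine ⟨m, hmY, hmX, insert_subset hmY fun a ha => ?_, m, mem_insert_self _ _, hmX, ?_⟩
  · obtain ⟨haX, hma⟩ := mem_filter.1 ha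
    by_contra haY
    exact (hm a (Or.inl ⟨haX, haY⟩)).not_gt hma
  · rintro j (⟨hjX, hjU⟩ | ⟨hjU, hjX⟩)
    · exact not_lt.1 fun hmj => hjU (mem_insert_of_mem (mem_filter.2 ⟨hjX, hmj⟩))
    · rcases mem_insert.1 hjU with rfl | hj
      · exact le_rfl
      · exact absurd (mem_filter.1 hj).1 hjX

end BinaryOrder

lemma binLT_rset_removeNth {k n : ℕ} {p : Fin (n + 1)} {x y : Fin (n + 1) → Fin (k + 1)}
    (hp : x p = y p) {i : ℕ} (h : binLT (rset x i) (rset y i)) :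
    binLT (rset (p.removeNth x) i) (rset (p.removeNth y) i) := by
  rw [binLT_iff_toColex_lt, ← Colex.toColex_image_lt_toColex_image (Fin.strictMono_succAbove p)]
  simp only [image_rset_removeNth]
  rw [← binLT_iff_toColex_lt, binLT_erase_iff (by simp [hp])]
  exact h

section Order

variable {k N : ℕ} {x y z : Fin N → Fin (k + 1)}

lemma plt_trans (hxy : plt x y) (hyz : plt y z) : plt x z := by
  rcases hxy with hxy | ⟨hc₁, i₁, hb₁, hu₁⟩ <;>
    rcases hyz with hyz | ⟨hc₂, i₂, hb₂, hu₂⟩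
  · exact Or.inl (hyz.trans hxy)
  · exact Or.inl (hc₂ ▸ hxy)
  · exact Or.inl (hc₁ ▸ hyz)
  refine Or.inr ⟨hc₁.trans hc₂, ?_⟩
  rcases lt_trichotomy i₁ i₂ with h | rfl | h
  · exact ⟨i₂, hu₁ i₂ h ▸ hb₂, fun j hj => (hu₁ j (h.trans hj)).trans (hu₂ j hj)⟩
  · exact ⟨i₁, binLT_trans hb₁ hb₂, fun j hj => (hu₁ j hj).trans (hu₂ j hj)⟩
  · exact ⟨i₁, (hu₂ i₁ h).symm ▸ hb₁,
      fun j hj => (hu₁ j hj).trans (hu₂ j (h.trans hj))⟩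

lemma ple_trans (hxy : ple x y) (hyz : ple y z) : ple x z := by
  rcases hxy with rfl | hxy
  · exact hyz
  rcases hyz with rfl | hyz
  · exact Or.inr hxy
  · exact Or.inr (plt_trans hxy hyz)

lemma exists_greatest_rset_ne (hxy : x ≠ y) :
    ∃ i, rset x i ≠ rset y i ∧ ∀ j, i < j → rset x j = rset y j := by
  obtain ⟨q, hq⟩ := Function.ne_iff.1 hxy
  have hP : rset x (x q) ≠ rset y (x q) := fun h => by
    have hqy : q ∈ rset y (x q) := h ▸ mem_rset.2 rfl
    exact hq (Fin.ext (mem_rset.1 hqy).symm)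
  refine ⟨Nat.findGreatest (fun i => rset x i ≠ rset y i) k,
    Nat.findGreatest_spec (P := fun i => rset x i ≠ rset y i) (Fin.is_le (x q)) hP,
    fun j hj => ?_⟩
  by_cases hjk : j ≤ k
  · exact not_not.1 (Nat.findGreatest_is_greatest hj hjk)
  · rw [rset_eq_empty_of_lt (fun p => Fin.is_le (x p)) (not_le.1 hjk),
      rset_eq_empty_of_lt (fun p => Fin.is_le (y p)) (not_le.1 hjk)]

/-- At the top level `i` where `x ≤ y` differ, `R_i(x) ⊂ R_i(y)`. -/
lemma ple_of_le (hxy : x ≤ y) : ple x y := by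
  by_cases heq : x = y
  · exact Or.inl heq
  have hzero : rset y 0 ⊆ rset x 0 := fun p hp => by
    have := hxy p
    simp only [mem_rset] at hp ⊢
    rw [Fin.le_iff_val_le_val] at this
    omega
  rcases (card_le_card hzero).lt_or_eq with hlt | hcard
  · exact Or.inr (Or.inl hlt)
  obtain ⟨i, hi, hgt⟩ := exists_greatest_rset_ne heq
  refine Or.inr (Or.inr ⟨hcard.symm, i, ?_, hgt⟩)
  rw [binLT_iff_toColex_lt]
  refine Colex.toColex_lt_toColex_of_ssubset (ssubset_of_subset_of_ne (fun q hq => ?_) hi)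
  by_contra hqy
  have hxq : (x q : ℕ) = i := mem_rset.1 hq
  have hlt : i < y q := lt_of_le_of_ne (hxq ▸ Fin.le_iff_val_le_val.1 (hxy q))
    (fun h => hqy (mem_rset.2 h.symm))
  have hq' : q ∈ rset x (y q) := (hgt _ hlt).symm ▸ mem_rset.2 rfl
  exact hlt.ne (hxq.symm.trans (mem_rset.1 hq'))

lemma plt_of_binLT_rset_top {s : ℕ} (hx : ∀ p, (x p : ℕ) ≤ s)
    (hy : ∀ p, (y p : ℕ) ≤ s) (hcard : #(rset x 0) = #(rset y 0))
    (h : binLT (rset x s) (rset y s)) : plt x y :=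
  Or.inr ⟨hcard, s, h, fun _ hj => by
    rw [rset_eq_empty_of_lt hx hj, rset_eq_empty_of_lt hy hj]⟩

end Order

lemma plt_removeNth {k n : ℕ} {p : Fin (n + 1)} {x y : Fin (n + 1) → Fin (k + 1)}
    (hp : x p = y p) (h : plt x y) : plt (p.removeNth x) (p.removeNth y) := by
  have hx := card_rset_removeNth p x 0
  have hy := card_rset_removeNth p y 0
  rw [hp] at hx
  rcases h with h | ⟨hcard, i, hi, hgt⟩
  · exact Or.inl (by omega)
  refine Or.inr ⟨by omega, i, binLT_rset_removeNth hp hi, fun j hj => ?_⟩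
  ext a
  simpa [Fin.removeNth] using congrArg (p.succAbove a ∈ ·) (hgt j hj)

lemma ple_mem_initSeg {k N m : ℕ} {x y : Fin N → Fin (k + 1)} (hy : y ∈ initSeg k N m)
    (hxy : ple x y) : x ∈ initSeg k N m := by
  simp only [initSeg, mem_filter, mem_univ, true_and] at hy ⊢
  exact (card_le_card fun z hz => by
    simp only [mem_filter, mem_univ, true_and] at hz ⊢
    exact ple_trans hz hxy).trans hy

lemma insertNth_mem_compress {k n : ℕ} {p : Fin (n + 1)}
    {A : Finset (Fin (n + 1) → Fin (k + 1))} {t : Fin (k + 1)} {y : Fin n → Fin (k + 1)} :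
    p.insertNth t y ∈ compress p A ↔
      y ∈ initSeg k n #{y' | p.insertNth t y' ∈ A} := by
  simp [compress, Fin.insertNth_inj]

/-- The slice of `A` through `y` in direction `p` is an initial segment. -/
lemma IsCompressed.mem_of_ple {k n : ℕ} {A : Finset (Fin (n + 1) → Fin (k + 1))}
    (hA : IsCompressed A) {x y : Fin (n + 1) → Fin (k + 1)} (hy : y ∈ A) {p : Fin (n + 1)}
    (hp : x p = y p) (hxy : ple x y) : x ∈ A := by
  rcases hxy with rfl | hlt
  · exact hy
  rw [← hA p, ← Fin.insertNth_self_removeNth p y, insertNth_mem_compress] at hy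
  rw [← hA p, ← Fin.insertNth_self_removeNth p x, insertNth_mem_compress, hp]
  exact ple_mem_initSeg hy (Or.inr (plt_removeNth hp hlt))

lemma val_le_mval {k N : ℕ} (x : Fin N → Fin (k + 1)) (p : Fin N) : (x p : ℕ) ≤ mval x :=
  le_sup (f := fun i => (x i : ℕ)) (mem_univ p)

lemma val_one_of_pos {k : ℕ} (hk : 1 ≤ k) : ((1 : Fin (k + 1)) : ℕ) = 1 := by
  rw [Fin.val_one', Nat.one_mod_eq_one]
  omega

lemma update_zero_mem_dShadow {k N : ℕ} {B : Finset (Fin N → Fin (k + 1))}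
    {y : Fin N → Fin (k + 1)} (hy : y ∈ B) {j : Fin N} (hj : y j ≠ 0) :
    Function.update y j 0 ∈ dShadow B := by
  simp only [dShadow, mem_biUnion, mem_image, mem_filter, mem_univ, true_and]
  exact ⟨y, hy, j, hj, rfl⟩

/-- The witness is `w` with every nonzero coordinate outside `U` lowered to `1`. -/
lemma exists_lower_outside_mem {k n s : ℕ} (hs : 2 ≤ s)
    {A : Finset (Fin (n + 1) → Fin (k + 1))} (hA : IsCompressed A)
    {w : Fin (n + 1) → Fin (k + 1)} (hw : w ∈ A) (hwle : ∀ p, (w p : ℕ) ≤ s)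
    {U : Finset (Fin (n + 1))} (hUw : U ⊆ rset w s) {m : Fin (n + 1)} (hm : m ∈ U) :
    ∃ u ∈ A, (∀ p, (u p : ℕ) ≤ s) ∧ rset u s = U ∧ rset u 0 = rset w 0 ∧
      ∀ p ∉ U, p ∉ rset w 0 → (u p : ℕ) = 1 := by
  have hwU : ∀ p ∈ U, (w p : ℕ) = s := fun p hp => mem_rset.1 (hUw hp)
  have hone := val_one_of_pos (k := k) (by have := (w m).isLt; have := hwU m hm; omega)
  set u : Fin (n + 1) → Fin (k + 1) := fun p => if p ∈ U then w p else min (w p) 1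
  have hu_in : ∀ p ∈ U, u p = w p := fun p hp => if_pos hp
  have hu_out : ∀ p ∉ U, (u p : ℕ) = min (w p : ℕ) 1 := fun p hp => by
    simp only [u, if_neg hp, Fin.coe_min, hone]
  have huw : u ≤ w := fun p => by
    by_cases hp : p ∈ U
    · exact (hu_in p hp).le
    · exact Fin.le_iff_val_le_val.2 (by rw [hu_out p hp]; exact min_le_left _ _)
  refine ⟨u, hA.mem_of_ple hw (hu_in m hm) (ple_of_le huw), fun p => ?_, ?_, ?_, ?_⟩
  · exact (Fin.le_iff_val_le_val.1 (huw p)).trans (hwle p)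
  · ext p
    by_cases hp : p ∈ U
    · simp [hp, hu_in p hp, hwU p hp]
    · simp only [mem_rset, hu_out p hp, hp, iff_false]
      omega
  · ext p
    by_cases hp : p ∈ U
    · simp [hu_in p hp]
    · simp only [mem_rset, hu_out p hp]
      omega
  · intro p hp hp0
    rw [hu_out p hp]
    simp only [mem_rset] at hp0
    omega

lemma exists_update_one_eq {k N r : ℕ} (hk : 1 ≤ k) (hr : 1 ≤ r) {z u : Fin N → Fin (k + 1)}
    (hz0 : #(rset z 0) = r + 1) (hu0 : #(rset u 0) = r) {U : Finset (Fin N)} {m : Fin N}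
    (hmu : m ∉ rset u 0) (hUz : ∀ p ∈ U, p ≠ m → p ∉ rset z 0)
    (hu1 : ∀ p ∉ U, p ∉ rset u 0 → (u p : ℕ) = 1) :
    ∃ j ∈ rset z 0, ∃ q, Function.update z j 1 q = u q := by
  by_cases hsub : rset z 0 ⊆ insert m (rset u 0)
  · have heq : rset z 0 = insert m (rset u 0) :=
      eq_of_subset_of_card_le hsub ((card_insert_le _ _).trans (by omega))
    obtain ⟨q, hq⟩ : (rset u 0).Nonempty := card_pos.1 (by omega)
    refine ⟨m, heq ▸ mem_insert_self _ _, q, ?_⟩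
    have hzq : q ∈ rset z 0 := heq ▸ mem_insert_of_mem hq
    rw [Function.update_of_ne (ne_of_mem_of_not_mem hq hmu)]
    exact Fin.ext ((mem_rset.1 hzq).trans (mem_rset.1 hq).symm)
  · obtain ⟨j, hjz, hj⟩ := not_subset.1 hsub
    have hjU : j ∉ U := fun hjU =>
      hUz j hjU (fun h => hj (h ▸ mem_insert_self _ _)) hjz
    refine ⟨j, hjz, j, ?_⟩
    rw [Function.update_self]
    exact Fin.ext ((val_one_of_pos hk).trans (hu1 j hjU (fun h => hj (mem_insert_of_mem h))).symm)

lemma mem_dShadow_of_binLT {k n r s : ℕ} (hr : 1 ≤ r) (hs : 2 ≤ s)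
    {A : Finset (Fin (n + 1) → Fin (k + 1))} (hA : IsCompressed A)
    {w z : Fin (n + 1) → Fin (k + 1)}
    (hw : w ∈ A) (hwle : ∀ p, (w p : ℕ) ≤ s) (hw0 : #(rset w 0) = r)
    (hzle : ∀ p, (z p : ℕ) ≤ s) (hz0 : #(rset z 0) = r + 1)
    (hzw : binLT (rset z s) (rset w s)) :
    z ∈ dShadow (A ∩ Bexact k (n + 1) r) := by
  obtain ⟨m, hmw, -, hUw, hzU⟩ := exists_binLT_insert_filter hzw
  obtain ⟨u, huA, hule, hus, hu0, hu1⟩ :=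
    exists_lower_outside_mem hs hA hw hwle hUw (mem_insert_self _ _)
  have hk : 1 ≤ k := by have := (w m).isLt; have := mem_rset.1 hmw; omega
  have hmu : m ∉ rset u 0 := by rw [hu0, mem_rset, mem_rset.1 hmw]; omega
  have hUz : ∀ p ∈ insert m ((rset z s).filter (m < ·)), p ≠ m → p ∉ rset z 0 := by
    intro p hp hpm
    have hzp := mem_rset.1 (mem_filter.1 ((mem_insert.1 hp).resolve_left hpm)).1
    rw [mem_rset, hzp]
    omega
  obtain ⟨j, hj, q, hq⟩ := exists_update_one_eq hk hr hz0 (hu0 ▸ hw0) hmu hUz (hu0 ▸ hu1)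
  have hzj : (z j : ℕ) = 0 := mem_rset.1 hj
  set y := Function.update z j 1 with hy
  have hone := val_one_of_pos hk
  have hyle : ∀ p, (y p : ℕ) ≤ s := fun p => by
    rcases eq_or_ne p j with rfl | hp
    · rw [hy, Function.update_self, hone]; omega
    · simpa [y, hp] using hzle p
  have hy0 : #(rset y 0) = r := by
    rw [rset_update, if_neg (by omega), card_erase_of_mem hj, hz0, Nat.add_sub_cancel]
  have hys : rset y s = rset z s := by
    rw [rset_update, if_neg (by omega), erase_eq_of_notMem (by rw [mem_rset, hzj]; omega)]
  have hyA : y ∈ A := hA.mem_of_ple huA hq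
    (Or.inr (plt_of_binLT_rset_top hyle hule (by rw [hy0, hu0, hw0]) (by rwa [hys, hus])))
  have hyj : y j ≠ 0 := by
    rw [hy, Function.update_self]
    exact Fin.ne_of_val_ne (by rw [hone, Fin.val_zero]; exact one_ne_zero)
  have hzy : z = Function.update y j 0 := by
    rw [Function.update_idem, ← (Fin.ext hzj : z j = 0), Function.update_eq_self]
  rw [hzy]
  exact update_zero_mem_dShadow (mem_inter.2 ⟨hyA, by simpa [Bexact] using hy0⟩) hyj

theorem claim8_general (k n r s : ℕ) (hr1 : 1 ≤ r) (hs1 : 2 ≤ s)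
    (A : Finset (Fin (n + 1) → Fin (k + 1))) (hA : IsCompressed A) (T : Finset (Fin (n + 1)))
    (hT : (classSet k (n + 1) s r T ∩ (A ∩ Bexact k (n + 1) r)).Nonempty) :
    ∀ S : Finset (Fin (n + 1)), S.Nonempty → S.card ≤ (n + 1) - r → binLT S T →
      dShadow (classSet k (n + 1) s r S) ⊆ dShadow (A ∩ Bexact k (n + 1) r) := by
  obtain ⟨w, hw⟩ := hT
  simp only [classSet, Bexact, mem_inter, mem_filter, mem_univ, true_and] at hw
  obtain ⟨⟨hwm, hwT, hw0⟩, hwA, -⟩ := hw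
  intro S _ _ hST z hz
  simp only [dShadow, mem_biUnion, mem_image, mem_filter, mem_univ, true_and] at hz
  obtain ⟨x, hx, i, hxi, rfl⟩ := hz
  simp only [classSet, mem_filter, mem_univ, true_and] at hx
  obtain ⟨hxm, hxS, hx0⟩ := hx
  have hi0 : i ∉ rset x 0 := fun h => hxi (Fin.ext (mem_rset.1 h))
  refine mem_dShadow_of_binLT hr1 hs1 hA hwA (fun p => hwm ▸ val_le_mval w p) hw0
    (fun p => ?_) ?_ ?_
  · rcases eq_or_ne p i with rfl | hp
    · simp
    · simpa [hp] using hxm ▸ val_le_mval x p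
  · rw [rset_update, if_pos (Fin.val_zero _), card_insert_of_notMem hi0, hx0]
  · rw [rset_update, if_neg (by rw [Fin.val_zero]; omega), hxS, hwT]
    exact binLT_of_subset_left (erase_subset i S) hST

/-- **Claim 8.** Let `n ≥ 3`, `1 ≤ r ≤ n − 2`, `2 ≤ s ≤ k − 1`, and let `A ⊆ [k]^n`
be compressed with `B_{≥ r+1} ∪ ([s]^n ∩ B_r) ⊆ A ⊆ B_{≥ r+1} ∪ ([s+1]^n ∩ B_r)`;
set `D = A ∩ B_r`. Let `T` be the largest element of `𝒜` under the binary order with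
`C_T ∩ D ≠ ∅`. Then for every `S ∈ 𝒜` with `S <_bin T` we have `d(C_S) ⊆ d(D)`.
(Dimension `n ≥ 3` is rendered as `n + 1` with `n ≥ 2`; alphabet `[k]` as `Fin (k+1)`,
so `s ≤ k`.) -/
theorem claim8 (k n r s : ℕ) (hn : 2 ≤ n) (hr1 : 1 ≤ r) (hr2 : r + 1 ≤ n)
    (hs1 : 2 ≤ s) (hs2 : s ≤ k)
    (A : Finset (Fin (n + 1) → Fin (k + 1))) (hA : IsCompressed A)
    (hlow : Bge k (n + 1) (r + 1) ∪ (box k (n + 1) s ∩ Bexact k (n + 1) r) ⊆ A)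
    (hhigh : A ⊆ Bge k (n + 1) (r + 1) ∪ (box k (n + 1) (s + 1) ∩ Bexact k (n + 1) r))
    (T : Finset (Fin (n + 1))) (hTne : T.Nonempty) (hTcard : T.card ≤ (n + 1) - r)
    (hT : (classSet k (n + 1) s r T ∩ (A ∩ Bexact k (n + 1) r)).Nonempty)
    (hTmax : ∀ S : Finset (Fin (n + 1)), S.Nonempty → S.card ≤ (n + 1) - r →
      (classSet k (n + 1) s r S ∩ (A ∩ Bexact k (n + 1) r)).Nonempty → S = T ∨ binLT S T) :
    ∀ S : Finset (Fin (n + 1)), S.Nonempty → S.card ≤ (n + 1) - r → binLT S T →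
      dShadow (classSet k (n + 1) s r S) ⊆ dShadow (A ∩ Bexact k (n + 1) r) :=
  claim8_general k n r s hr1 hs1 A hA T hT
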